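/- Fix a square root i ∈ k of -1. There are, up to isomorphism of pre-metric groups, exactly two degenerate anisotropic pre-metric groups (G,q) with |G| a power of 2, namely: (ℤ/2ℤ, n ↦ (-1)ⁿ) and ((ℤ/2ℤ)², (m,n) ↦ i^{m̄}·(-1)^{n̄}), where m̄, n̄ ∈ {0,1} denote the representatives of m, n. (Replacing i by -i in the second example yields an isomorphic pre-metric group, so the classification does not depend on the choice of i.) -/

import Mathlib

/-- The bicharacter associated with a `kˣ`-valued function `q` on `G`:
`b(g,h) = q(g+h) · q(g)⁻¹ · q(h)⁻¹`. -/
def bchar {k : Type*} [Field k] {G : Type*} [AddCommGroup G] (q : G → kˣ) (g h : G) : kˣ :=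
  q (g + h) * (q g)⁻¹ * (q h)⁻¹

/-- `q : G → kˣ` is a quadratic form: `q (-g) = q g` for all `g`, and the associated
function `bchar q` is bimultiplicative. -/
structure IsQuadForm {k : Type*} [Field k] {G : Type*} [AddCommGroup G] (q : G → kˣ) : Prop where
  map_neg : ∀ g : G, q (-g) = q g
  bchar_add_left : ∀ g₁ g₂ h : G, bchar q (g₁ + g₂) h = bchar q g₁ h * bchar q g₂ h
  bchar_add_right : ∀ g h₁ h₂ : G, bchar q g (h₁ + h₂) = bchar q g h₁ * bchar q g h₂

/-- The Gauss sum `τ⁺(G,q) = ∑_{g ∈ G} q(g)`, as an element of `k`. -/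
noncomputable def tauPlus {k : Type*} [Field k] {G : Type*} [AddCommGroup G] (q : G → kˣ) : k :=
  ∑ᶠ g : G, (q g : k)

/-- The Gauss sum `τ⁻(G,q) = ∑_{g ∈ G} q(g)⁻¹`, as an element of `k`. -/
noncomputable def tauMinus {k : Type*} [Field k] {G : Type*} [AddCommGroup G] (q : G → kˣ) : k :=
  ∑ᶠ g : G, (((q g)⁻¹ : kˣ) : k)

/-- Non-degeneracy of (the bicharacter associated with) `q` : the map
`g ↦ b(g, ·)` from `G` to `Hom(G, kˣ)` is injective. -/
def Nondeg {k : Type*} [Field k] {G : Type*} [AddCommGroup G] (q : G → kˣ) : Prop :=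
  Function.Injective fun g : G => fun h : G => bchar q g h

/-- Isomorphism of pre-metric groups: a group isomorphism `φ : G₁ ≃ G₂`
with `q₂ ∘ φ = q₁`. -/
def PMIso {k : Type*} [Field k] {G₁ : Type*} [AddCommGroup G₁] {G₂ : Type*} [AddCommGroup G₂]
    (q₁ : G₁ → kˣ) (q₂ : G₂ → kˣ) : Prop :=
  ∃ φ : G₁ ≃+ G₂, ∀ g : G₁, q₂ (φ g) = q₁ g

/-- The quadratic form `n ↦ (-1)ⁿ` on `ℤ/2ℤ`. -/
def qA {k : Type*} [Field k] : ZMod 2 → kˣ :=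
  fun n => (-1 : kˣ) ^ n.val

/-- The quadratic form `(m,n) ↦ i^m · (-1)ⁿ` on `(ℤ/2ℤ)²`. -/
def qB {k : Type*} [Field k] (i : kˣ) : ZMod 2 × ZMod 2 → kˣ :=
  fun mn => i ^ mn.1.val * (-1 : kˣ) ^ mn.2.val

/-! A nonzero radical element `r` has `q r = -1` and `2r = 0`, so `q (g + r) = -q g`; by
anisotropy `r` is then the only nonzero element with `q = -1`. An element `x` of order `4` would
have `2x = r`, and `q x ^ 4 = q (2x) = -1` would clash with
`q x ^ 4 = b(x, x)² = b(x, 2x) = b(x, r) = 1`; hence a `2`-group is elementary abelian. Then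
`q g ² = b(g, g)` squares to `b(2g, g) = 1`, which forces `q g ² = -1` for `g ∉ {0, r}`, and for
two such elements `q (g + h)² = 1`, i.e. `g + h ∈ {0, r}`. So `G = {0, r}`, or
`G = {0, r, g, g + r}` with `q g = ±i`, where `g` may be replaced by `g + r` to get `q g = i`. -/

open Function

theorem ZMod.eq_zero_or_eq_one : ∀ a : ZMod 2, a = 0 ∨ a = 1 := by
  decide

theorem PMIso.of_bijective {k : Type*} [Field k] {G₁ G₂ : Type*} [AddCommGroup G₁]
    [AddCommGroup G₂] {q₁ : G₁ → kˣ} {q₂ : G₂ → kˣ} (f : G₂ →+ G₁) (hf : Bijective f)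
    (h : ∀ x, q₁ (f x) = q₂ x) : PMIso q₁ q₂ := by
  refine ⟨(AddEquiv.ofBijective f hf).symm, fun g => ?_⟩
  obtain ⟨x, rfl⟩ := hf.2 g
  rw [h, ← AddEquiv.ofBijective_apply f hf, AddEquiv.symm_apply_apply]

theorem Units.neg_one_ne_one_of_ringChar_ne_two {R : Type*} [Ring R] [Nontrivial R]
    (hR : ringChar R ≠ 2) : (-1 : Rˣ) ≠ 1 := fun h =>
  Ring.neg_one_ne_one_of_char_ne_two hR (by simpa using congrArg Units.val h)

theorem Units.eq_one_or_eq_neg_one_of_sq_eq_one {R : Type*} [CommRing R] [NoZeroDivisors R]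
    {x : Rˣ} (h : x ^ 2 = 1) : x = 1 ∨ x = -1 :=
  Units.eq_or_eq_neg_of_sq_eq_sq x 1 (by rw [h, one_pow])

section

variable {k : Type*} [Field k] {G : Type*} [AddCommGroup G]

def IsAnisotropic (q : G → kˣ) : Prop :=
  ∀ g : G, g ≠ 0 → q g ≠ 1

theorem map_add_eq_mul_bchar (q : G → kˣ) (g h : G) : q (g + h) = q g * q h * bchar q g h := by
  simp [bchar, mul_left_comm, mul_assoc]

theorem bchar_comm (q : G → kˣ) (g h : G) : bchar q g h = bchar q h g := by
  rw [bchar, bchar, add_comm, mul_right_comm]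

end

namespace IsQuadForm

variable {k : Type*} [Field k] {G : Type*} [AddCommGroup G] {q : G → kˣ} {r : G}

theorem bchar_zero_left (hq : IsQuadForm q) (h : G) : bchar q 0 h = 1 := by
  simpa using hq.bchar_add_left 0 0 h

theorem bchar_zero_right (hq : IsQuadForm q) (g : G) : bchar q g 0 = 1 := by
  rw [bchar_comm, hq.bchar_zero_left]

theorem map_zero (hq : IsQuadForm q) : q 0 = 1 := by
  simpa [hq.bchar_zero_left] using map_add_eq_mul_bchar q 0 0

theorem bchar_self (hq : IsQuadForm q) (x : G) : bchar q x x = q x ^ 2 := by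
  have h0 : q x ^ 2 * bchar q x (-x) = 1 := by
    simpa [hq.map_zero, hq.map_neg, sq] using (map_add_eq_mul_bchar q x (-x)).symm
  have hinv : bchar q x x * bchar q x (-x) = 1 := by
    rw [← hq.bchar_add_right, add_neg_cancel, hq.bchar_zero_right]
  exact mul_right_cancel (hinv.trans h0.symm)

theorem map_add_self (hq : IsQuadForm q) (x : G) : q (x + x) = q x ^ 4 := by
  rw [map_add_eq_mul_bchar q, hq.bchar_self]
  group

theorem not_nondeg_iff (hq : IsQuadForm q) :
    ¬Nondeg q ↔ ∃ r : G, r ≠ 0 ∧ ∀ h, bchar q r h = 1 := by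
  constructor
  · intro hnd
    obtain ⟨a, b, hab, hne⟩ := not_injective_iff.mp hnd
    refine ⟨a - b, sub_ne_zero.mpr hne, fun h => ?_⟩
    have := hq.bchar_add_left (a - b) b h
    rwa [sub_add_cancel, show bchar q a h = bchar q b h from congrFun hab h,
      right_eq_mul] at this
  · rintro ⟨r, hr0, hr⟩ hnd
    exact hr0 (hnd (funext fun h => (hr h).trans (hq.bchar_zero_left h).symm))

theorem map_radical (hq : IsQuadForm q) (han : IsAnisotropic q) (hr0 : r ≠ 0)
    (hr : ∀ h, bchar q r h = 1) : q r = -1 :=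
  (Units.eq_one_or_eq_neg_one_of_sq_eq_one (by rw [← hq.bchar_self, hr])).resolve_left
    (han r hr0)

theorem radical_add_self (hq : IsQuadForm q) (han : IsAnisotropic q)
    (hr : ∀ h, bchar q r h = 1) : r + r = 0 := by
  by_contra hne
  apply han _ hne
  rw [hq.map_add_self, show 4 = 2 * 2 by rfl, pow_mul, ← hq.bchar_self, hr, one_pow]

theorem map_add_radical (hq : IsQuadForm q) (han : IsAnisotropic q) (hr0 : r ≠ 0)
    (hr : ∀ h, bchar q r h = 1) (g : G) : q (g + r) = -q g := by
  rw [map_add_eq_mul_bchar q, bchar_comm, hr, hq.map_radical han hr0 hr, mul_one, mul_neg_one]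

theorem add_radical_ne_zero (hq : IsQuadForm q) (han : IsAnisotropic q)
    (hr : ∀ h, bchar q r h = 1) {g : G} (hgr : g ≠ r) : g + r ≠ 0 := fun h =>
  hgr ((eq_neg_of_add_eq_zero_left h).trans
    (neg_eq_of_add_eq_zero_left (hq.radical_add_self han hr)))

theorem eq_radical_of_map_eq_neg_one (hq : IsQuadForm q) (han : IsAnisotropic q) (hr0 : r ≠ 0)
    (hr : ∀ h, bchar q r h = 1) {y : G} (hy : q y = -1) : y = r := by
  by_contra hyr
  exact han _ (hq.add_radical_ne_zero han hr hyr)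
    (by rw [hq.map_add_radical han hr0 hr, hy, neg_neg])

theorem add_self_eq_zero_of_add_self_add_self (hk : ringChar k ≠ 2) (hq : IsQuadForm q)
    (han : IsAnisotropic q) (hr0 : r ≠ 0) (hr : ∀ h, bchar q r h = 1) {x : G}
    (hx : (x + x) + (x + x) = 0) : x + x = 0 := by
  by_contra hne
  have hsq : q (x + x) ^ 2 = 1 := by
    rw [← hq.bchar_self, hq.bchar_add_left, ← hq.bchar_add_right, hx, hq.bchar_zero_right]
  have h2x : x + x = r := hq.eq_radical_of_map_eq_neg_one han hr0 hr
    ((Units.eq_one_or_eq_neg_one_of_sq_eq_one hsq).resolve_left (han _ hne))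
  apply Units.neg_one_ne_one_of_ringChar_ne_two hk
  calc (-1 : kˣ) = q (x + x) := by rw [h2x, hq.map_radical han hr0 hr]
    _ = bchar q x (x + x) := by rw [hq.map_add_self, hq.bchar_add_right, hq.bchar_self]; group
    _ = 1 := by rw [h2x, bchar_comm, hr]

theorem add_self_eq_zero_of_card_eq_two_pow [Finite G] (hk : ringChar k ≠ 2)
    (hq : IsQuadForm q) (han : IsAnisotropic q) (hr0 : r ≠ 0) (hr : ∀ h, bchar q r h = 1)
    (hcard : ∃ m : ℕ, Nat.card G = 2 ^ m) (x : G) : x + x = 0 := by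
  obtain ⟨m, hm⟩ := hcard
  suffices ∀ (n : ℕ) (x : G), 2 ^ n • x = 0 → x + x = 0 from
    this m x (hm ▸ card_nsmul_eq_zero')
  intro n
  induction n with
  | zero => intro x hx; rw [pow_zero, one_nsmul] at hx; rw [hx, add_zero]
  | succ n ih =>
    intro x hx
    refine hq.add_self_eq_zero_of_add_self_add_self hk han hr0 hr (ih (x + x) ?_)
    rwa [← two_nsmul, ← mul_nsmul, ← pow_succ']

theorem map_sq_eq_neg_one (hq : IsQuadForm q) (han : IsAnisotropic q) (hr0 : r ≠ 0)
    (hr : ∀ h, bchar q r h = 1) {g : G} (hg : g + g = 0) (hg0 : g ≠ 0) (hgr : g ≠ r) :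
    q g ^ 2 = -1 := by
  have hsq : (q g ^ 2) ^ 2 = 1 := by
    rw [← hq.bchar_self, sq, ← hq.bchar_add_left, hg, hq.bchar_zero_left]
  refine (Units.eq_one_or_eq_neg_one_of_sq_eq_one hsq).resolve_left fun h1 => ?_
  rcases Units.eq_one_or_eq_neg_one_of_sq_eq_one h1 with h | h
  · exact han g hg0 h
  · exact hgr (hq.eq_radical_of_map_eq_neg_one han hr0 hr h)

theorem add_eq_zero_or_eq_radical (hq : IsQuadForm q) (han : IsAnisotropic q) (hr0 : r ≠ 0)
    (hr : ∀ h, bchar q r h = 1) (h2 : ∀ x : G, x + x = 0) {g h : G} (hg0 : g ≠ 0)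
    (hgr : g ≠ r) (hh0 : h ≠ 0) (hhr : h ≠ r) : g + h = 0 ∨ g + h = r := by
  have hsq : q (g + h) ^ 2 = 1 := by
    rw [map_add_eq_mul_bchar q, mul_pow, mul_pow, hq.map_sq_eq_neg_one han hr0 hr (h2 g) hg0 hgr,
      hq.map_sq_eq_neg_one han hr0 hr (h2 h) hh0 hhr,
      sq (bchar q g h), ← hq.bchar_add_left, h2, hq.bchar_zero_left, neg_one_mul, neg_neg, mul_one]
  by_contra! hne
  rcases Units.eq_one_or_eq_neg_one_of_sq_eq_one hsq with h1 | h1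
  · exact han _ hne.1 h1
  · exact hne.2 (hq.eq_radical_of_map_eq_neg_one han hr0 hr h1)

theorem pmIso_qA (hq : IsQuadForm q) (han : IsAnisotropic q) (hr0 : r ≠ 0)
    (hr : ∀ h, bchar q r h = 1) (h2 : ∀ x : G, x + x = 0) (hall : ∀ x : G, x = 0 ∨ x = r) :
    PMIso q qA := by
  let _ : Module (ZMod 2) G := AddCommGroup.zmodModule (by simpa [two_nsmul] using h2)
  obtain ⟨f, hf⟩ : ∃ f : ZMod 2 →+ G, ∀ a, f a = a • r :=
    ⟨(LinearMap.toSpanSingleton (ZMod 2) G r).toAddMonoidHom, fun _ => rfl⟩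
  refine PMIso.of_bijective f ⟨(injective_iff_map_eq_zero f).2 fun a ha => ?_, fun x => ?_⟩ ?_
  · rcases a.eq_zero_or_eq_one with rfl | rfl <;> simp_all
  · rcases hall x with rfl | rfl
    exacts [⟨0, by simp [hf]⟩, ⟨1, by simp [hf]⟩]
  · intro a
    rcases a.eq_zero_or_eq_one with rfl | rfl <;>
      simp [hf, qA, ZMod.val_one, hq.map_zero, hq.map_radical han hr0 hr]

theorem pmIso_qB (hq : IsQuadForm q) (han : IsAnisotropic q) (hr0 : r ≠ 0)
    (hr : ∀ h, bchar q r h = 1) (h2 : ∀ x : G, x + x = 0) {i : kˣ} {g : G} (hg0 : g ≠ 0)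
    (hgr : g ≠ r) (hqg : q g = i) : PMIso q (qB i) := by
  let _ : Module (ZMod 2) G := AddCommGroup.zmodModule (by simpa [two_nsmul] using h2)
  obtain ⟨f, hf⟩ : ∃ f : ZMod 2 × ZMod 2 →+ G, ∀ a b, f (a, b) = a • g + b • r :=
    ⟨((LinearMap.toSpanSingleton (ZMod 2) G g).coprod
      (LinearMap.toSpanSingleton (ZMod 2) G r)).toAddMonoidHom, fun _ _ => rfl⟩
  refine PMIso.of_bijective f
    ⟨(injective_iff_map_eq_zero f).2 fun ⟨a, b⟩ hab => ?_, fun x => ?_⟩ ?_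
  · have hgr0 := hq.add_radical_ne_zero han hr hgr
    rcases a.eq_zero_or_eq_one with rfl | rfl <;> rcases b.eq_zero_or_eq_one with rfl | rfl <;>
      simp_all
  · by_cases hx0 : x = 0
    · exact ⟨0, by simp [hx0]⟩
    by_cases hxr : x = r
    · exact ⟨(0, 1), by simp [hf, hxr]⟩
    have hx : x = g + (g + x) := by rw [← add_assoc, h2, zero_add]
    rcases hq.add_eq_zero_or_eq_radical han hr0 hr h2 hg0 hgr hx0 hxr with h | h
    exacts [⟨(1, 0), by rw [hf, hx, h]; simp⟩, ⟨(1, 1), by rw [hf, hx, h]; simp⟩]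
  · rintro ⟨a, b⟩
    rcases a.eq_zero_or_eq_one with rfl | rfl <;> rcases b.eq_zero_or_eq_one with rfl | rfl <;>
      simp [hf, qB, ZMod.val_one, hq.map_zero, hq.map_radical han hr0 hr,
        hq.map_add_radical han hr0 hr, hqg]

theorem pmIso_qA_or_pmIso_qB [Finite G] (hk : ringChar k ≠ 2) (hq : IsQuadForm q)
    (hnd : ¬Nondeg q) (han : IsAnisotropic q) (hcard : ∃ m : ℕ, Nat.card G = 2 ^ m) {i : kˣ}
    (hi : i ^ 2 = -1) : PMIso q qA ∨ PMIso q (qB i) := by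
  obtain ⟨r, hr0, hr⟩ := hq.not_nondeg_iff.1 hnd
  have h2 := hq.add_self_eq_zero_of_card_eq_two_pow hk han hr0 hr hcard
  by_cases hall : ∀ x : G, x = 0 ∨ x = r
  · exact .inl (hq.pmIso_qA han hr0 hr h2 hall)
  push Not at hall
  obtain ⟨g, hg0, hgr⟩ := hall
  have hsq : q g ^ 2 = i ^ 2 := by rw [hi, hq.map_sq_eq_neg_one han hr0 hr (h2 g) hg0 hgr]
  rcases Units.eq_or_eq_neg_of_sq_eq_sq _ _ hsq with hqg | hqg
  · exact .inr (hq.pmIso_qB han hr0 hr h2 hg0 hgr hqg)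
  · refine .inr (hq.pmIso_qB han hr0 hr h2 (hq.add_radical_ne_zero han hr hgr) ?_
      (by rw [hq.map_add_radical han hr0 hr, hqg, neg_neg]))
    rwa [Ne, add_eq_right]

end IsQuadForm

section models

variable {k : Type*} [Field k]

theorem qA_add (g h : ZMod 2) : qA (k := k) (g + h) = qA g * qA h := by
  rcases g.eq_zero_or_eq_one with rfl | rfl <;> rcases h.eq_zero_or_eq_one with rfl | rfl <;>
    simp [qA, ZMod.val_one, CharTwo.add_self_eq_zero]

theorem bchar_qA (g h : ZMod 2) : bchar (qA (k := k)) g h = 1 := by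
  simp [bchar, qA_add]

theorem isQuadForm_qA : IsQuadForm (qA (k := k)) where
  map_neg g := by rw [ZMod.neg_eq_self_mod_two]
  bchar_add_left _ _ _ := by simp only [bchar_qA, mul_one]
  bchar_add_right _ _ _ := by simp only [bchar_qA, mul_one]

theorem not_nondeg_qA : ¬Nondeg (qA (k := k)) :=
  isQuadForm_qA.not_nondeg_iff.2 ⟨1, one_ne_zero, bchar_qA 1⟩

theorem isAnisotropic_qA (hk : ringChar k ≠ 2) : IsAnisotropic (qA (k := k)) := by
  intro g hg
  rcases g.eq_zero_or_eq_one with rfl | rfl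
  · exact absurd rfl hg
  · simpa [qA, ZMod.val_one] using Units.neg_one_ne_one_of_ringChar_ne_two hk

theorem bchar_qB {i : kˣ} (hi : i ^ 2 = -1) (p p' : ZMod 2 × ZMod 2) :
    bchar (qB i) p p' = qA (p.1 * p'.1) := by
  have hi' : i⁻¹ * i⁻¹ = -1 := by rw [← mul_inv, ← sq, hi, inv_neg, inv_one]
  obtain ⟨a, b⟩ := p
  obtain ⟨c, d⟩ := p'
  rcases a.eq_zero_or_eq_one with rfl | rfl <;> rcases b.eq_zero_or_eq_one with rfl | rfl <;>
    rcases c.eq_zero_or_eq_one with rfl | rfl <;> rcases d.eq_zero_or_eq_one with rfl | rfl <;>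
    simp [bchar, qA, qB, ZMod.val_one, CharTwo.add_self_eq_zero, hi']

theorem isQuadForm_qB {i : kˣ} (hi : i ^ 2 = -1) : IsQuadForm (qB i) where
  map_neg p := by simp only [qB, Prod.fst_neg, Prod.snd_neg, ZMod.neg_eq_self_mod_two]
  bchar_add_left _ _ _ := by simp only [bchar_qB hi, Prod.fst_add, add_mul, qA_add]
  bchar_add_right _ _ _ := by simp only [bchar_qB hi, Prod.fst_add, mul_add, qA_add]

theorem not_nondeg_qB {i : kˣ} (hi : i ^ 2 = -1) : ¬Nondeg (qB i) :=
  (isQuadForm_qB hi).not_nondeg_iff.2 ⟨(0, 1), by decide, fun p => by simp [bchar_qB hi, qA]⟩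

theorem isAnisotropic_qB (hk : ringChar k ≠ 2) {i : kˣ} (hi : i ^ 2 = -1) :
    IsAnisotropic (qB i) := by
  have h1 := Units.neg_one_ne_one_of_ringChar_ne_two hk
  have hi1 : i ≠ 1 := fun h => h1 (by rw [← hi, h, one_pow])
  have hi2 : -i ≠ 1 := fun h => h1 (by rw [← hi, ← neg_sq, h, one_pow])
  rintro ⟨a, b⟩ hp
  rcases a.eq_zero_or_eq_one with rfl | rfl <;> rcases b.eq_zero_or_eq_one with rfl | rfl <;>
    simp [qB, ZMod.val_one, h1, hi1, hi2] at hp ⊢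

theorem not_pmIso_qA_qB (i : kˣ) : ¬PMIso (qA (k := k)) (qB i) := by
  rintro ⟨φ, -⟩
  simpa using Nat.card_congr φ.toEquiv

theorem pmIso_qB_neg (i : kˣ) : PMIso (qB i) (qB (-i)) := by
  obtain ⟨f, hf⟩ : ∃ f : ZMod 2 × ZMod 2 →+ ZMod 2 × ZMod 2, ∀ a b, f (a, b) = (a, a + b) :=
    ⟨(AddMonoidHom.fst _ _).prod (AddMonoidHom.fst _ _ + AddMonoidHom.snd _ _), fun _ _ => rfl⟩
  refine PMIso.of_bijective f (Involutive.bijective fun ⟨a, b⟩ => ?_) fun ⟨a, b⟩ => ?_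
  · simp [hf, ← add_assoc, CharTwo.add_self_eq_zero]
  · rcases a.eq_zero_or_eq_one with rfl | rfl <;> rcases b.eq_zero_or_eq_one with rfl | rfl <;>
      simp [hf, qB, ZMod.val_one, CharTwo.add_self_eq_zero]

end models

theorem classification_degenerate_anisotropic_two_groups_general
    {k : Type*} [Field k] [CharZero k]
    (i : kˣ) (hi : i ^ 2 = -1) :
    (IsQuadForm (qA (k := k)) ∧ ¬Nondeg (qA (k := k)) ∧
      (∀ g : ZMod 2, g ≠ 0 → qA (k := k) g ≠ 1) ∧
      (∃ m : ℕ, Nat.card (ZMod 2) = 2 ^ m)) ∧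
    (IsQuadForm (qB i) ∧ ¬Nondeg (qB i) ∧
      (∀ g : ZMod 2 × ZMod 2, g ≠ 0 → qB i g ≠ 1) ∧
      (∃ m : ℕ, Nat.card (ZMod 2 × ZMod 2) = 2 ^ m)) ∧
    ¬PMIso (qA (k := k)) (qB i) ∧
    (∀ (G : Type*) [AddCommGroup G] [Finite G] (q : G → kˣ),
      IsQuadForm q → ¬Nondeg q → (∀ g : G, g ≠ 0 → q g ≠ 1) →
      (∃ m : ℕ, Nat.card G = 2 ^ m) →
      PMIso q (qA (k := k)) ∨ PMIso q (qB i)) ∧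
    PMIso (qB i) (qB (-i)) := by
  have hk : ringChar k ≠ 2 := by simp [ringChar.eq_zero]
  exact ⟨⟨isQuadForm_qA, not_nondeg_qA, isAnisotropic_qA hk, 1, by simp⟩,
    ⟨isQuadForm_qB hi, not_nondeg_qB hi, isAnisotropic_qB hk hi, 2, by simp⟩,
    not_pmIso_qA_qB i,
    fun _ _ _ _ hq hnd han hcard => hq.pmIso_qA_or_pmIso_qB hk hnd han hcard hi,
    pmIso_qB_neg i⟩

/-- Up to isomorphism there are exactly two degenerate anisotropic
pre-metric groups of `2`-power order, namely `(ℤ/2ℤ, (-1)ⁿ)` and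
`((ℤ/2ℤ)², i^m·(-1)ⁿ)`; and replacing `i` by `-i` gives an isomorphic pre-metric group. -/
theorem classification_degenerate_anisotropic_two_groups
    {k : Type*} [Field k] [IsAlgClosed k] [CharZero k]
    (i : kˣ) (hi : i ^ 2 = -1) :
    (IsQuadForm (qA (k := k)) ∧ ¬Nondeg (qA (k := k)) ∧
      (∀ g : ZMod 2, g ≠ 0 → qA (k := k) g ≠ 1) ∧
      (∃ m : ℕ, Nat.card (ZMod 2) = 2 ^ m)) ∧
    (IsQuadForm (qB i) ∧ ¬Nondeg (qB i) ∧
      (∀ g : ZMod 2 × ZMod 2, g ≠ 0 → qB i g ≠ 1) ∧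
      (∃ m : ℕ, Nat.card (ZMod 2 × ZMod 2) = 2 ^ m)) ∧
    ¬PMIso (qA (k := k)) (qB i) ∧
    (∀ (G : Type*) [AddCommGroup G] [Finite G] (q : G → kˣ),
      IsQuadForm q → ¬Nondeg q → (∀ g : G, g ≠ 0 → q g ≠ 1) →
      (∃ m : ℕ, Nat.card G = 2 ^ m) →
      PMIso q (qA (k := k)) ∨ PMIso q (qB i)) ∧
    PMIso (qB i) (qB (-i)) :=
  classification_degenerate_anisotropic_two_groups_general i hi
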